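/- arXiv:2409.01570 — 3 statements merged into one kernel-verified Lean document; each statement's English description precedes it below -/
import Mathlib

section
/- Let K satisfy the kernel assumption and let δ > 0. Then the convolution-smoothed loss l_δ(x) = ∫_ℝ |y| K_δ(x−y) dy is finite for every x ∈ ℝ, l_δ is convex and twice continuously differentiable on ℝ, and for every x ∈ ℝ its derivatives are l_δ'(x) = 2·K̃_δ(x) − 1 and l_δ''(x) = 2·K_δ(x). -/
/-!
Splitting `∫ |x - u| k(u) du` at `u = x` writes it explicitly in terms of `x`, the partial
integrals `∫_{u ≤ x} k` and `∫_{u ≤ x} u k(u)`, and the total integrals of `k` and `u k(u)`.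
Differentiating with the fundamental theorem of calculus, the two terms `± 2 x k(x)` cancel and
the derivative is `2 ∫_{u ≤ x} k - ∫ k`. For `k = K_δ` this is `2 K̃(x/δ) - 1`, whose derivative
`2 K_δ` is continuous and nonnegative, which gives both `C²` regularity and convexity.
-/

open MeasureTheory
open scoped BigOperators

/-- The kernel assumption: `K` is a nonnegative, symmetric kernel integrating to one,
bounded, Lipschitz, positive at zero, and `x ↦ x * K x` is bounded, Lipschitz and
absolutely integrable. -/
structure IsGoodKernel (K : ℝ → ℝ) : Prop where
  nonneg : ∀ x, 0 ≤ K x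
  symm : ∀ x, K x = K (-x)
  integral_one : (∫ x, K x) = 1
  bounded : ∃ B, ∀ x, |K x| ≤ B
  lipschitz : ∃ L : NNReal, LipschitzWith L K
  pos_at_zero : 0 < K 0
  bar_bounded : ∃ B, ∀ x, |x * K x| ≤ B
  bar_lipschitz : ∃ L : NNReal, LipschitzWith L (fun x => x * K x)
  bar_integrable : Integrable (fun x => x * K x)

/-- The scaled kernel `K_δ(x) = (1/δ) K(x/δ)`. -/
noncomputable def scaledKernel (K : ℝ → ℝ) (δ : ℝ) (x : ℝ) : ℝ := (1 / δ) * K (x / δ)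

/-- The integrated kernel `K̃(x) = ∫_{-∞}^x K`. -/
noncomputable def intKernel (K : ℝ → ℝ) (x : ℝ) : ℝ := ∫ y in Set.Iic x, K y

/-- The convolution-type smoothed loss `l_δ(x) = ∫ |y| K_δ(x - y) dy`. -/
noncomputable def smoothedLoss (K : ℝ → ℝ) (δ : ℝ) (x : ℝ) : ℝ :=
  ∫ y, |y| * scaledKernel K δ (x - y)

open Set

theorem hasDerivAt_setIntegral_Iic {E : Type*} [NormedAddCommGroup E] [NormedSpace ℝ E]
    [CompleteSpace E] {f : ℝ → E} (hf : Integrable f) (hc : Continuous f) (x : ℝ) :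
    HasDerivAt (fun u => ∫ y in Iic u, f y) (f x) x := by
  have h : (fun u => ∫ y in Iic u, f y) = fun u => (∫ y in Iic 0, f y) + ∫ y in 0..u, f y := by
    funext u
    rw [← intervalIntegral.integral_Iic_sub_Iic hf.integrableOn hf.integrableOn, add_sub_cancel]
  rw [h]
  exact (intervalIntegral.integral_hasDerivAt_right hf.intervalIntegrable
    (hc.stronglyMeasurableAtFilter _ _) hc.continuousAt).const_add _

theorem contDiff_two_of_hasDerivAt {𝕜 F : Type*} [NontriviallyNormedField 𝕜]
    [NormedAddCommGroup F] [NormedSpace 𝕜 F] {f f' f'' : 𝕜 → F} (hf : ∀ x, HasDerivAt f (f' x) x)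
    (hf' : ∀ x, HasDerivAt f' (f'' x) x) (hf'' : Continuous f'') : ContDiff 𝕜 2 f := by
  have hderiv : deriv f = f' := funext fun x => (hf x).deriv
  rw [show (2 : WithTop ℕ∞) = 1 + 1 from rfl, contDiff_succ_iff_deriv, hderiv,
    contDiff_one_iff_deriv, funext fun x => (hf' x).deriv]
  exact ⟨fun x => (hf x).differentiableAt, by simp, fun x => (hf' x).differentiableAt, hf''⟩

theorem convexOn_univ_of_hasDerivAt2_nonneg {f f' f'' : ℝ → ℝ}
    (hf : ∀ x, HasDerivAt f (f' x) x) (hf' : ∀ x, HasDerivAt f' (f'' x) x)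
    (hf''_nonneg : ∀ x, 0 ≤ f'' x) : ConvexOn ℝ univ f := by
  have hderiv : deriv f = f' := funext fun x => (hf x).deriv
  refine Monotone.convexOn_univ_of_deriv (fun x => (hf x).differentiableAt) ?_
  rw [hderiv]
  exact monotone_of_hasDerivAt_nonneg hf' hf''_nonneg

section AbsConvolution

variable {k : ℝ → ℝ}

theorem integrable_abs_sub_mul (hk : Integrable k) (hk₁ : Integrable fun u => u * k u) (x : ℝ) :
    Integrable fun u => |x - u| * k u := by
  refine ((hk.norm.const_mul |x|).add hk₁.norm).mono'
    ((continuous_const.sub continuous_id).abs.aestronglyMeasurable.mul hk.aestronglyMeasurable)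
    (.of_forall fun u => ?_)
  change ‖|x - u| * k u‖ ≤ |x| * ‖k u‖ + ‖u * k u‖
  rw [norm_mul, norm_mul, Real.norm_eq_abs |x - u|, abs_abs, Real.norm_eq_abs u, ← add_mul]
  exact mul_le_mul_of_nonneg_right (abs_sub _ _) (norm_nonneg _)

theorem integrable_abs_mul_comp_sub (hk : Integrable k) (hk₁ : Integrable fun u => u * k u)
    (x : ℝ) : Integrable fun y => |y| * k (x - y) := by
  simpa only [sub_sub_cancel] using (integrable_abs_sub_mul hk hk₁ x).comp_sub_left x

theorem integral_abs_sub_mul (hk : Integrable k) (hk₁ : Integrable fun u => u * k u) (x : ℝ) :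
    ∫ u, |x - u| * k u = x * (2 * (∫ u in Iic x, k u) - ∫ u, k u)
      - 2 * (∫ u in Iic x, u * k u) + ∫ u, u * k u := by
  have hIic : ∫ u in Iic x, |x - u| * k u = x * (∫ u in Iic x, k u) - ∫ u in Iic x, u * k u := by
    rw [← integral_const_mul, ← integral_sub (hk.integrableOn.const_mul x) hk₁.integrableOn]
    refine setIntegral_congr_fun measurableSet_Iic fun u (hu : u ≤ x) => ?_
    rw [abs_of_nonneg (sub_nonneg.2 hu)]
    ring
  have hIoi : ∫ u in Ioi x, |x - u| * k u = (∫ u in Ioi x, u * k u) - x * ∫ u in Ioi x, k u := by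
    rw [← integral_const_mul, ← integral_sub hk₁.integrableOn (hk.integrableOn.const_mul x)]
    refine setIntegral_congr_fun measurableSet_Ioi fun u (hu : x < u) => ?_
    rw [abs_of_neg (sub_neg.2 hu)]
    ring
  have hsplit {g : ℝ → ℝ} (hg : Integrable g) :
      (∫ u in Iic x, g u) + ∫ u in Ioi x, g u = ∫ u, g u :=
    intervalIntegral.integral_Iic_add_Ioi hg.integrableOn hg.integrableOn
  rw [← hsplit (integrable_abs_sub_mul hk hk₁ x), hIic, hIoi]
  linear_combination (-x) * hsplit hk + hsplit hk₁

theorem hasDerivAt_integral_abs_sub_mul (hk : Integrable k) (hk₁ : Integrable fun u => u * k u)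
    (hc : Continuous k) (x : ℝ) :
    HasDerivAt (fun x => ∫ u, |x - u| * k u) (2 * (∫ u in Iic x, k u) - ∫ u, k u) x := by
  have hG := hasDerivAt_setIntegral_Iic hk hc x
  have hH := hasDerivAt_setIntegral_Iic hk₁ (continuous_id.mul hc) x
  have h := (((hasDerivAt_id' x).fun_mul ((hG.const_mul 2).sub_const (∫ u, k u))).fun_sub
    (hH.const_mul 2)).add_const (∫ u, u * k u)
  simp_rw [integral_abs_sub_mul hk hk₁]
  exact h.congr_deriv (by ring)

end AbsConvolution

section ScaledKernel

variable {K : ℝ → ℝ} {δ : ℝ}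

theorem IsGoodKernel.integrable (hK : IsGoodKernel K) : Integrable K :=
  Integrable.of_integral_ne_zero (by rw [hK.integral_one]; exact one_ne_zero)

theorem IsGoodKernel.continuous (hK : IsGoodKernel K) : Continuous K :=
  hK.lipschitz.choose_spec.continuous

theorem scaledKernel_nonneg (hK : ∀ x, 0 ≤ K x) (hδ : 0 < δ) (x : ℝ) :
    0 ≤ scaledKernel K δ x :=
  mul_nonneg (one_div_pos.2 hδ).le (hK _)

theorem continuous_scaledKernel (hK : Continuous K) (δ : ℝ) : Continuous (scaledKernel K δ) :=
  continuous_const.mul (hK.comp (continuous_id.div_const δ))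

theorem integrable_scaledKernel (hK : Integrable K) (hδ : δ ≠ 0) :
    Integrable (scaledKernel K δ) :=
  (hK.comp_div hδ).const_mul _

theorem integrable_mul_scaledKernel (hK : Integrable fun x => x * K x) (hδ : δ ≠ 0) :
    Integrable fun x => x * scaledKernel K δ x := by
  convert hK.comp_div hδ using 2 with x
  simp only [scaledKernel]
  field_simp

theorem integral_scaledKernel (hδ : 0 < δ) : ∫ x, scaledKernel K δ x = ∫ x, K x := by
  simp only [scaledKernel]
  rw [integral_const_mul, Measure.integral_comp_div, abs_of_pos hδ, smul_eq_mul, one_div,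
    inv_mul_cancel_left₀ hδ.ne']

theorem setIntegral_Iic_scaledKernel (hδ : 0 < δ) (x : ℝ) :
    ∫ u in Iic x, scaledKernel K δ u = intKernel K (x / δ) := by
  have hind : (Iic x).indicator (fun u => K (u / δ)) =
      fun u => (Iic (x / δ)).indicator K (u / δ) := by
    ext u
    simp only [indicator, mem_Iic, div_le_div_iff_of_pos_right hδ]
  simp only [scaledKernel, intKernel]
  rw [integral_const_mul, ← integral_indicator measurableSet_Iic, hind, Measure.integral_comp_div,
    integral_indicator measurableSet_Iic, abs_of_pos hδ, smul_eq_mul, one_div,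
    inv_mul_cancel_left₀ hδ.ne']

theorem smoothedLoss_eq_integral_abs_sub_mul (x : ℝ) :
    smoothedLoss K δ x = ∫ u, |x - u| * scaledKernel K δ u := by
  rw [smoothedLoss, ← integral_sub_left_eq_self _ volume x]
  simp only [sub_sub_cancel]

theorem hasDerivAt_smoothedLoss (hK : IsGoodKernel K) (hδ : 0 < δ) (x : ℝ) :
    HasDerivAt (smoothedLoss K δ) (2 * intKernel K (x / δ) - 1) x := by
  have h := hasDerivAt_integral_abs_sub_mul (integrable_scaledKernel hK.integrable hδ.ne')
    (integrable_mul_scaledKernel hK.bar_integrable hδ.ne')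
    (continuous_scaledKernel hK.continuous δ) x
  rw [setIntegral_Iic_scaledKernel hδ, integral_scaledKernel hδ, hK.integral_one] at h
  rwa [funext smoothedLoss_eq_integral_abs_sub_mul]

theorem hasDerivAt_intKernel_div (hK : Integrable K) (hc : Continuous K) (x : ℝ) :
    HasDerivAt (fun x => intKernel K (x / δ)) (scaledKernel K δ x) x := by
  exact ((hasDerivAt_setIntegral_Iic hK hc (x / δ)).comp x
    ((hasDerivAt_id' x).div_const δ)).congr_deriv (mul_comm _ _)

end ScaledKernel

/-- the smoothed loss is well defined (the defining integrand is integrable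
for every `x`), convex, twice continuously differentiable, and its derivatives are
`l_δ'(x) = 2 K̃_δ(x) - 1` and `l_δ''(x) = 2 K_δ(x)`. -/
theorem smoothedLoss_integrable_convex_contDiff_derivs
    (K : ℝ → ℝ) (hK : IsGoodKernel K) (δ : ℝ) (hδ : 0 < δ) :
    (∀ x : ℝ, Integrable (fun y => |y| * scaledKernel K δ (x - y))) ∧
    ConvexOn ℝ Set.univ (smoothedLoss K δ) ∧
    ContDiff ℝ 2 (smoothedLoss K δ) ∧
    (∀ x : ℝ, deriv (smoothedLoss K δ) x = 2 * intKernel K (x / δ) - 1) ∧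
    (∀ x : ℝ, deriv (deriv (smoothedLoss K δ)) x = 2 * scaledKernel K δ x) := by
  have hl' : ∀ x, HasDerivAt (smoothedLoss K δ) (2 * intKernel K (x / δ) - 1) x :=
    hasDerivAt_smoothedLoss hK hδ
  have hl'' : ∀ x, HasDerivAt (fun x => 2 * intKernel K (x / δ) - 1) (2 * scaledKernel K δ x) x :=
    fun x => ((hasDerivAt_intKernel_div hK.integrable hK.continuous x).const_mul 2).sub_const 1
  have hderiv : deriv (smoothedLoss K δ) = fun x => 2 * intKernel K (x / δ) - 1 :=
    funext fun x => (hl' x).deriv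
  refine ⟨integrable_abs_mul_comp_sub (integrable_scaledKernel hK.integrable hδ.ne')
      (integrable_mul_scaledKernel hK.bar_integrable hδ.ne'),
    convexOn_univ_of_hasDerivAt2_nonneg hl' hl''
      fun x => mul_nonneg zero_le_two (scaledKernel_nonneg hK.nonneg hδ x),
    contDiff_two_of_hasDerivAt hl' hl''
      (continuous_const.mul (continuous_scaledKernel hK.continuous δ)),
    fun x => (hl' x).deriv, fun x => hderiv ▸ (hl'' x).deriv⟩
end

section
/- Let K satisfy the kernel assumption. Then there exist constants C₁ > 0 and C₂ > 0, depending only on K, such that for every bandwidth δ > 0 and every x ∈ ℝ, l_δ(x) − l_δ(0) ≥ min{ C₁ x² / δ , C₂ |x| }. -/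
open MeasureTheory
open scoped BigOperators

lemma good_integrable {K : ℝ → ℝ} (hK : IsGoodKernel K) : Integrable K := by
  by_contra h
  have := hK.integral_one
  rw [integral_undef h] at this
  norm_num at this

lemma scaled_integrable {K : ℝ → ℝ} (hK : IsGoodKernel K) {δ : ℝ} (hδ : 0 < δ) :
    Integrable (scaledKernel K δ) := by
  have : Integrable (fun x => K (x / δ)) := (good_integrable hK).comp_div hδ.ne'
  exact this.const_mul (1 / δ)

lemma scaled_abs_integrable {K : ℝ → ℝ} (hK : IsGoodKernel K) {δ : ℝ} (hδ : 0 < δ) :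
    Integrable (fun z => |z| * scaledKernel K δ z) := by
  have h1 : Integrable (fun z => (z / δ) * K (z / δ)) := hK.bar_integrable.comp_div hδ.ne'
  have h2 := h1.abs
  refine h2.congr (Filter.Eventually.of_forall fun z => ?_)
  simp only [abs_mul, abs_div, abs_of_pos hδ]
  unfold scaledKernel
  rw [abs_of_nonneg (hK.nonneg _)]
  ring

lemma scaled_nonneg {K : ℝ → ℝ} (hK : IsGoodKernel K) {δ : ℝ} (hδ : 0 < δ) (z : ℝ) :
    0 ≤ scaledKernel K δ z := by
  unfold scaledKernel
  have := hK.nonneg (z / δ)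
  positivity

lemma scaled_continuous {K : ℝ → ℝ} (hK : IsGoodKernel K) (δ : ℝ) :
    Continuous (scaledKernel K δ) := by
  obtain ⟨L, hL⟩ := hK.lipschitz
  exact continuous_const.mul (hL.continuous.comp (continuous_id.div_const δ))

lemma shifted_integrable {K : ℝ → ℝ} (hK : IsGoodKernel K) {δ : ℝ} (hδ : 0 < δ) (x : ℝ) :
    Integrable (fun z => |x - z| * scaledKernel K δ z) := by
  have hg : Integrable (fun z => |x| * scaledKernel K δ z + |z| * scaledKernel K δ z) :=
    ((scaled_integrable hK hδ).const_mul |x|).add (scaled_abs_integrable hK hδ)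
  refine hg.mono' ?_ (Filter.Eventually.of_forall fun z => ?_)
  · exact (((continuous_const.sub continuous_id).abs).mul
      (scaled_continuous hK δ)).aestronglyMeasurable
  · have h1 : 0 ≤ scaledKernel K δ z := scaled_nonneg hK hδ z
    rw [Real.norm_eq_abs, abs_mul, abs_of_nonneg h1, abs_abs, ← add_mul]
    exact mul_le_mul_of_nonneg_right (abs_sub _ _) h1

lemma smoothedLoss_rep (K : ℝ → ℝ) (δ x : ℝ) :
    smoothedLoss K δ x = ∫ z, |x - z| * scaledKernel K δ z := by
  unfold smoothedLoss
  rw [← integral_sub_left_eq_self (fun z => |x - z| * scaledKernel K δ z) volume x]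
  congr 1
  funext y
  simp [sub_sub_cancel]

/-- there exist constants `C₁, C₂ > 0` depending only on `K` such that for
every bandwidth `δ > 0` and every `x`, `l_δ(x) - l_δ(0) ≥ min { C₁ x²/δ , C₂ |x| }`. -/
theorem smoothedLoss_lower_growth
    (K : ℝ → ℝ) (hK : IsGoodKernel K) :
    ∃ C₁ > (0 : ℝ), ∃ C₂ > (0 : ℝ), ∀ δ > (0 : ℝ), ∀ x : ℝ,
      min (C₁ * x ^ 2 / δ) (C₂ * |x|) ≤ smoothedLoss K δ x - smoothedLoss K δ 0 := by
  obtain ⟨L₀, hL₀⟩ := hK.lipschitz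
  set L : ℝ := (L₀ : ℝ) + 1 with hLdef
  have hLpos : 0 < L := by positivity
  have hLip : ∀ a b : ℝ, |K a - K b| ≤ L * |a - b| := by
    intro a b
    have h := hL₀.dist_le_mul a b
    rw [Real.dist_eq, Real.dist_eq] at h
    have h2 : (L₀ : ℝ) * |a - b| ≤ L * |a - b| :=
      mul_le_mul_of_nonneg_right (by simp [hLdef]) (abs_nonneg _)
    linarith
  have hK0 : 0 < K 0 := hK.pos_at_zero
  set K0 : ℝ := K 0 with hK0def
  set r : ℝ := K0 / (2 * L) with hrdef
  have hr : 0 < r := by positivity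
  refine ⟨K0 / 4, by positivity, K0 * r / 4, by positivity, ?_⟩
  intro δ hδ x
  set Kd : ℝ → ℝ := scaledKernel K δ with hKd
  set m : ℝ := min |x| (r * δ) with hmdef
  have hm0 : 0 ≤ m := le_min (abs_nonneg x) (by positivity)
  have hmx : m ≤ |x| := min_le_left _ _
  have hmr : m ≤ r * δ := min_le_right _ _
  -- kernel lower bound on (0, m]
  have hker : ∀ z ∈ Set.Ioc (0:ℝ) m, K0 / (2 * δ) ≤ Kd z := by
    intro z hz
    have hz0 : 0 < z := hz.1
    have hzr : z ≤ r * δ := le_trans hz.2 hmr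
    have h2 : |z / δ| ≤ r := by
      rw [abs_of_pos (div_pos hz0 hδ), div_le_iff₀ hδ]
      linarith
    have e1 : K0 - K (z / δ) ≤ |K (z / δ) - K 0| := by
      rw [abs_sub_comm]
      exact le_abs_self _
    have e2 : |K (z / δ) - K 0| ≤ L * |z / δ - 0| := hLip _ _
    have e3 : L * |z / δ - 0| ≤ L * r := by
      rw [sub_zero]
      exact mul_le_mul_of_nonneg_left h2 hLpos.le
    have hLr : L * r = K0 / 2 := by
      rw [hrdef]
      field_simp
    have h3 : K0 / 2 ≤ K (z / δ) := by linarith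
    calc K0 / (2 * δ) = (1 / δ) * (K0 / 2) := by ring
      _ ≤ (1 / δ) * K (z / δ) := by
          apply mul_le_mul_of_nonneg_left h3 (by positivity)
      _ = Kd z := rfl
  -- representations
  have hIx : Integrable (fun z => |x - z| * Kd z) := shifted_integrable hK hδ x
  have hI0 : Integrable (fun z => |z| * Kd z) := scaled_abs_integrable hK hδ
  have hIx' : Integrable (fun z => |x + z| * Kd z) := by
    refine (shifted_integrable hK hδ (-x)).congr (Filter.Eventually.of_forall fun z => ?_)
    show |-x - z| * scaledKernel K δ z = |x + z| * Kd z
    rw [show -x - z = -(x + z) by ring, abs_neg]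
  have h0simp : smoothedLoss K δ 0 = ∫ z, |z| * Kd z := by
    rw [smoothedLoss_rep]
    congr 1
    funext z
    rw [zero_sub, abs_neg]
  have hdiff : smoothedLoss K δ x - smoothedLoss K δ 0
      = ∫ z, (|x - z| - |z|) * Kd z := by
    rw [smoothedLoss_rep, h0simp, ← integral_sub hIx hI0]
    congr 1
    funext z
    ring
  have hsymKd : ∀ z, Kd (-z) = Kd z := by
    intro z
    show scaledKernel K δ (-z) = scaledKernel K δ z
    unfold scaledKernel
    rw [neg_div, ← hK.symm]
  have hneg : (∫ z, (|x - z| - |z|) * Kd z) = ∫ z, (|x + z| - |z|) * Kd z := by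
    rw [← integral_neg_eq_self (fun z => (|x + z| - |z|) * Kd z) volume]
    congr 1
    funext z
    rw [hsymKd z, ← sub_eq_add_neg, abs_neg]
  have e1 : Integrable (fun z => (|x - z| - |z|) * Kd z) := by
    refine (hIx.sub hI0).congr (Filter.Eventually.of_forall fun z => ?_)
    simp only [Pi.sub_apply]
    ring
  have e2 : Integrable (fun z => (|x + z| - |z|) * Kd z) := by
    refine (hIx'.sub hI0).congr (Filter.Eventually.of_forall fun z => ?_)
    simp only [Pi.sub_apply]
    ring
  have h2diff : 2 * (smoothedLoss K δ x - smoothedLoss K δ 0)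
      = ∫ z, (|x - z| + |x + z| - 2 * |z|) * Kd z := by
    have key : 2 * (∫ z, (|x - z| - |z|) * Kd z)
        = (∫ z, (|x - z| - |z|) * Kd z) + (∫ z, (|x + z| - |z|) * Kd z) := by
      rw [← hneg]
      ring
    rw [hdiff, key, ← integral_add e1 e2]
    congr 1
    funext z
    ring
  have hInt : Integrable (fun z => (|x - z| + |x + z| - 2 * |z|) * Kd z) := by
    refine (e1.add e2).congr (Filter.Eventually.of_forall fun z => ?_)
    simp only [Pi.add_apply]
    ring
  have hh_nonneg : ∀ z, 0 ≤ (|x - z| + |x + z| - 2 * |z|) * Kd z := by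
    intro z
    apply mul_nonneg _ (scaled_nonneg hK hδ z)
    have h1 : |2 * z| ≤ |z - x| + |z + x| := by
      calc |2 * z| = |(z - x) + (z + x)| := by ring_nf
        _ ≤ |z - x| + |z + x| := abs_add_le _ _
    rw [abs_mul, abs_two] at h1
    rw [abs_sub_comm x z, add_comm x z]
    linarith
  have step1 : (∫ z in Set.Ioc 0 m, (|x - z| + |x + z| - 2 * |z|) * Kd z)
      ≤ ∫ z, (|x - z| + |x + z| - 2 * |z|) * Kd z :=
    setIntegral_le_integral hInt (Filter.Eventually.of_forall hh_nonneg)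
  have step2 : (∫ z in Set.Ioc 0 m, (|x| - z) * (K0 / δ))
      ≤ ∫ z in Set.Ioc 0 m, (|x - z| + |x + z| - 2 * |z|) * Kd z := by
    refine setIntegral_mono_on ?_ hInt.integrableOn measurableSet_Ioc ?_
    · exact (((continuous_abs.comp continuous_const).sub continuous_id).mul
        continuous_const).integrableOn_Ioc
    · intro z hz
      have hz0 : 0 < z := hz.1
      have hzx : z ≤ |x| := le_trans hz.2 hmx
      have habs : |x - z| + |x + z| - 2 * |z| = 2 * (|x| - z) := by
        rw [abs_of_pos hz0]
        rcases le_total 0 x with hx | hx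
        · rw [abs_of_nonneg hx] at hzx
          rw [abs_of_nonneg hx, abs_of_nonneg (by linarith : (0:ℝ) ≤ x - z),
            abs_of_nonneg (by linarith : (0:ℝ) ≤ x + z)]
          ring
        · rw [abs_of_nonpos hx] at hzx
          rw [abs_of_nonpos hx, abs_of_nonpos (by linarith : x - z ≤ 0),
            abs_of_nonpos (by linarith : x + z ≤ 0)]
          ring
      calc (|x| - z) * (K0 / δ) = (2 * (|x| - z)) * (K0 / (2 * δ)) := by ring
        _ ≤ (2 * (|x| - z)) * Kd z :=
            mul_le_mul_of_nonneg_left (hker z hz) (by linarith)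
        _ = (|x - z| + |x + z| - 2 * |z|) * Kd z := by rw [habs]
  have step3 : (∫ z in Set.Ioc 0 m, (|x| - z) * (K0 / δ))
      = (|x| * m - m ^ 2 / 2) * (K0 / δ) := by
    rw [← intervalIntegral.integral_of_le hm0,
      intervalIntegral.integral_mul_const,
      intervalIntegral.integral_sub intervalIntegrable_const
        intervalIntegral.intervalIntegrable_id]
    simp only [integral_id, intervalIntegral.integral_const, smul_eq_mul, sub_zero]
    ring
  have hfinal : K0 * |x| / (4 * δ) * m ≤ smoothedLoss K δ x - smoothedLoss K δ 0 := by
    have hmm : m ^ 2 ≤ |x| * m := by nlinarith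
    have hle : (|x| * m - m ^ 2 / 2) * (K0 / δ)
        ≤ 2 * (smoothedLoss K δ x - smoothedLoss K δ 0) := by
      rw [h2diff]
      calc (|x| * m - m ^ 2 / 2) * (K0 / δ)
          = ∫ z in Set.Ioc 0 m, (|x| - z) * (K0 / δ) := step3.symm
        _ ≤ _ := le_trans step2 step1
    have hq : K0 * |x| / (4 * δ) * m ≤ (|x| * m - m ^ 2 / 2) * (K0 / δ) / 2 := by
      have h2 : K0 * |x| / (4 * δ) * m = (K0 * (|x| * m)) / (4 * δ) := by ring
      have h3 : (|x| * m - m ^ 2 / 2) * (K0 / δ) / 2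
          = (K0 * (2 * (|x| * m) - m ^ 2)) / (4 * δ) := by
        field_simp
        ring
      rw [h2, h3]
      gcongr
      nlinarith
    linarith
  have hmin : min (K0 / 4 * x ^ 2 / δ) (K0 * r / 4 * |x|) = K0 * |x| / (4 * δ) * m := by
    have ea : K0 / 4 * x ^ 2 / δ = K0 * |x| / (4 * δ) * |x| := by
      field_simp
      rw [← sq_abs x]
    have eb : K0 * r / 4 * |x| = K0 * |x| / (4 * δ) * (r * δ) := by
      field_simp
    rw [ea, eb, hmdef, ← mul_min_of_nonneg _ _ (by positivity)]
  rw [hmin]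
  exact hfinal
end

section
/- (Local gradient lower bound, noiseless case) Let x_⋆ ∈ ℝ^p, K satisfy the kernel assumption, a_1, …, a_n ∈ ℝ^p be fixed vectors, and b_i = (a_iᵀx_⋆)². Suppose there exist ρ > 0 and λ_s > 0 such that F_δ(y) − F_δ(x) ≥ ∇F_δ(x)ᵀ(y−x) − (ρ/2)‖y−x‖₂² for all x, y ∈ ℝ^p, and F_δ(x) − F_δ(x_⋆) ≥ λ_s·min{Δ(x), Δ(x)²/δ} for all x ∈ ℝ^p. Then for every δ ∈ (0, λ_s/ρ] and every x with ‖x − x_⋆‖₂ ≤ λ_s/ρ, ∇F_δ(x)ᵀ(x − x_⋆) ≥ (λ_s/2)·min{Δ(x), Δ(x)²/δ}; likewise for every x with ‖x + x_⋆‖₂ ≤ λ_s/ρ, ∇F_δ(x)ᵀ(x + x_⋆) ≥ (λ_s/2)·min{Δ(x), Δ(x)²/δ}. Consequently, ∇F_δ(x) ≠ 0 for every x with 0 < Δ(x) ≤ λ_s/ρ. -/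
open MeasureTheory ProbabilityTheory
open scoped BigOperators RealInnerProductSpace Gradient

/-- The smoothed empirical objective
`F_δ(x) = (1/n) ∑ᵢ l_δ((aᵢᵀ x)² - bᵢ)`. -/
noncomputable def smoothedObj {p n : ℕ} (K : ℝ → ℝ) (δ : ℝ)
    (a : Fin n → EuclideanSpace ℝ (Fin p)) (b : Fin n → ℝ)
    (x : EuclideanSpace ℝ (Fin p)) : ℝ :=
  (n : ℝ)⁻¹ * ∑ i, smoothedLoss K δ ((⟪a i, x⟫) ^ 2 - b i)

/-- `Δ(x) = min(‖x - x⋆‖, ‖x + x⋆‖)`, the distance to the pair of true signals. -/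
noncomputable def distSig {p : ℕ} (xs x : EuclideanSpace ℝ (Fin p)) : ℝ :=
  min ‖x - xs‖ ‖x + xs‖

/-- The standard Gaussian measure `N(0, I_p)` on `EuclideanSpace ℝ (Fin p)`. -/
noncomputable def stdGaussian (p : ℕ) : Measure (EuclideanSpace ℝ (Fin p)) :=
  Measure.map (MeasurableEquiv.toLp 2 (Fin p → ℝ))
    (Measure.pi fun _ => gaussianReal 0 1)

/-- `a` is a family of i.i.d. standard Gaussian random vectors in `ℝ^p`. -/
def IsIIDStdGaussian {Ω : Type*} [MeasurableSpace Ω] (P : Measure Ω) {p : ℕ} {ι : Type*}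
    (a : ι → Ω → EuclideanSpace ℝ (Fin p)) : Prop :=
  (∀ i, Measurable (a i)) ∧
  iIndepFun a P ∧
  (∀ i, Measure.map (a i) P = stdGaussian p)

/-!
`F_δ` sees `x` only through the squares `⟪aᵢ, x⟫²`, so it is even and `∇F_δ(0) = 0`. Weak
convexity between `0` and `x⋆`, played against sharpness at `0`, forces `x⋆ = 0` or
`ρ ‖x⋆‖ ≥ 2λ_s`; either way `Δ(x) = ‖x - x⋆‖` on the ball of radius `λ_s/ρ` about `x⋆`. There,
weak convexity between `x` and `x⋆` gives `⟪∇F_δ(x), x - x⋆⟫ ≥ F_δ(x) - F_δ(x⋆) - ρ/2 ‖x - x⋆‖²`,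
and since `ρδ ≤ λ_s` and `ρ ‖x - x⋆‖ ≤ λ_s` the quadratic term costs at most half of the sharpness
gain `λ_s min(Δ, Δ²/δ)`. By evenness, `-x⋆` is as good a signal as `x⋆`, which gives the ball
about `-x⋆`.
-/

theorem Function.Even.gradient_zero {E : Type*} [NormedAddCommGroup E] [InnerProductSpace ℝ E]
    [CompleteSpace E] {f : E → ℝ} (hf : Function.Even f) : ∇ f 0 = 0 := by
  have hcomp := (ContinuousLinearEquiv.neg ℝ (M := E)).comp_right_fderiv (f := f) (x := 0)
  rw [show f ∘ ContinuousLinearEquiv.neg ℝ = f from funext hf] at hcomp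
  have hD0 : fderiv ℝ f 0 = 0 := by
    ext v
    have := congr($hcomp v)
    simp only [ContinuousLinearEquiv.neg_apply, neg_zero, ContinuousLinearMap.comp_apply,
      ContinuousLinearEquiv.coe_coe, map_neg] at this
    rw [zero_apply]
    linarith
  rw [gradient, hD0, map_zero]

theorem smoothedObj_even {p n : ℕ} (K : ℝ → ℝ) (δ : ℝ) (a : Fin n → EuclideanSpace ℝ (Fin p))
    (b : Fin n → ℝ) : Function.Even (smoothedObj K δ a b) := fun x => by
  simp only [smoothedObj, inner_neg_right, neg_sq]

theorem mul_sq_le_mul_min_sq_div {δ ρ lams d : ℝ} (hδ : 0 < δ) (hd : 0 ≤ d)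
    (hρδ : ρ * δ ≤ lams) (hρd : ρ * d ≤ lams) : ρ * d ^ 2 ≤ lams * min d (d ^ 2 / δ) := by
  rcases le_total d δ with hdδ | hδd
  · rw [min_eq_right (by rw [div_le_iff₀ hδ]; nlinarith), ← mul_div_assoc, le_div_iff₀ hδ]
    nlinarith [sq_nonneg d]
  · rw [min_eq_left (by rw [le_div_iff₀ hδ]; nlinarith)]
    nlinarith

theorem eq_zero_or_le_mul_of_mul_min_sq_div_le {δ ρ lams s : ℝ} (hδ : 0 < δ) (hlams : 0 < lams)
    (hs : 0 ≤ s) (hρδ : ρ * δ ≤ lams) (h : lams * min s (s ^ 2 / δ) ≤ ρ / 2 * s ^ 2) :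
    s = 0 ∨ 2 * lams ≤ ρ * s := by
  rcases le_total s δ with hsδ | hδs
  · left
    rw [min_eq_right (by rw [div_le_iff₀ hδ]; nlinarith), ← mul_div_assoc, div_le_iff₀ hδ] at h
    exact pow_eq_zero_iff two_ne_zero |>.mp
      (by nlinarith [sq_nonneg s, mul_le_mul_of_nonneg_right hρδ (sq_nonneg s)])
  · right
    rw [min_eq_left (by rw [le_div_iff₀ hδ]; nlinarith)] at h
    nlinarith

theorem norm_sub_le_norm_add_of_norm_sub_le {E : Type*} [NormedAddCommGroup E] [NormedSpace ℝ E]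
    {x y : E} (h : ‖x - y‖ ≤ ‖y‖) : ‖x - y‖ ≤ ‖x + y‖ := by
  have htwo : 2 * ‖y‖ ≤ ‖x + y‖ + ‖x - y‖ := by
    calc 2 * ‖y‖ = ‖(x + y) - (x - y)‖ := by
          rw [show (x + y) - (x - y) = (2 : ℝ) • y by module, norm_smul, Real.norm_two]
      _ ≤ ‖x + y‖ + ‖x - y‖ := norm_sub_le _ _
  linarith

def GeneralizedSharp {E : Type*} [NormedAddCommGroup E] (lams δ : ℝ) (f : E → ℝ) (xs : E) : Prop :=
  ∀ x, lams * min (min ‖x - xs‖ ‖x + xs‖) (min ‖x - xs‖ ‖x + xs‖ ^ 2 / δ) ≤ f x - f xs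

theorem GeneralizedSharp.neg {E : Type*} [NormedAddCommGroup E] {f : E → ℝ} {xs : E}
    {lams δ : ℝ} (h : GeneralizedSharp lams δ f xs) (hf : Function.Even f) :
    GeneralizedSharp lams δ f (-xs) := by
  intro x
  rw [sub_neg_eq_add, ← sub_eq_add_neg, min_comm ‖x + xs‖, hf xs]
  exact h x

section WeaklyConvexSharp

variable {E : Type*} [NormedAddCommGroup E] [InnerProductSpace ℝ E] [CompleteSpace E]

def WeaklyConvex (ρ : ℝ) (f : E → ℝ) : Prop :=
  ∀ x y, ⟪∇ f x, y - x⟫ - ρ / 2 * ‖y - x‖ ^ 2 ≤ f y - f x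

variable {f : E → ℝ} {xs : E} {δ ρ lams : ℝ}

theorem GeneralizedSharp.eq_zero_or_le_mul_norm (hsharp : GeneralizedSharp lams δ f xs)
    (hweak : WeaklyConvex ρ f) (hf : Function.Even f) (hδ : 0 < δ) (hlams : 0 < lams)
    (hρδ : ρ * δ ≤ lams) : xs = 0 ∨ 2 * lams ≤ ρ * ‖xs‖ := by
  have hgap : f 0 - f xs ≤ ρ / 2 * ‖xs‖ ^ 2 := by
    have := hweak 0 xs
    rw [hf.gradient_zero, inner_zero_left, sub_zero] at this
    linarith
  have hgain := hsharp 0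
  rw [zero_sub, norm_neg, zero_add, min_self] at hgain
  simpa using eq_zero_or_le_mul_of_mul_min_sq_div_le hδ hlams (norm_nonneg xs) hρδ
    (hgain.trans hgap)

theorem GeneralizedSharp.le_inner_gradient_sub (hsharp : GeneralizedSharp lams δ f xs)
    (hweak : WeaklyConvex ρ f) (hf : Function.Even f) (hδ : 0 < δ) (hρ : 0 < ρ)
    (hlams : 0 < lams) (hρδ : ρ * δ ≤ lams) {x : E} (hx : ‖x - xs‖ ≤ lams / ρ) :
    lams / 2 * min (min ‖x - xs‖ ‖x + xs‖) (min ‖x - xs‖ ‖x + xs‖ ^ 2 / δ) ≤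
      ⟪∇ f x, x - xs⟫ := by
  rw [le_div_iff₀' hρ] at hx
  have hΔ : min ‖x - xs‖ ‖x + xs‖ = ‖x - xs‖ := by
    refine min_eq_left ?_
    rcases hsharp.eq_zero_or_le_mul_norm hweak hf hδ hlams hρδ with rfl | hxs
    · simp
    · exact norm_sub_le_norm_add_of_norm_sub_le
        (le_of_mul_le_mul_left (by nlinarith [norm_nonneg (x - xs)]) hρ)
  have hgain := hsharp x
  have hloss := hweak x xs
  rw [hΔ] at hgain ⊢
  rw [norm_sub_rev xs x, ← neg_sub x xs, inner_neg_right] at hloss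
  have hquad := mul_sq_le_mul_min_sq_div hδ (norm_nonneg (x - xs)) hρδ hx
  linarith

end WeaklyConvexSharp

theorem local_gradient_lower_bound_noiseless_general
    {p n : ℕ} (xs : EuclideanSpace ℝ (Fin p))
    (K : ℝ → ℝ) (δ : ℝ) (hδ : 0 < δ)
    (a : Fin n → EuclideanSpace ℝ (Fin p)) (b : Fin n → ℝ)
    (ρ lams : ℝ) (hρ : 0 < ρ) (hlams : 0 < lams)
    (hweak : ∀ x y : EuclideanSpace ℝ (Fin p),
      ⟪∇ (smoothedObj K δ a b) x, y - x⟫ - ρ / 2 * ‖y - x‖ ^ 2 ≤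
        smoothedObj K δ a b y - smoothedObj K δ a b x)
    (hsharp : ∀ x : EuclideanSpace ℝ (Fin p),
      lams * min (distSig xs x) ((distSig xs x) ^ 2 / δ) ≤
        smoothedObj K δ a b x - smoothedObj K δ a b xs)
    (hδle : δ ≤ lams / ρ) :
    (∀ x : EuclideanSpace ℝ (Fin p), ‖x - xs‖ ≤ lams / ρ →
      lams / 2 * min (distSig xs x) ((distSig xs x) ^ 2 / δ) ≤
        ⟪∇ (smoothedObj K δ a b) x, x - xs⟫) ∧
    (∀ x : EuclideanSpace ℝ (Fin p), ‖x + xs‖ ≤ lams / ρ →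
      lams / 2 * min (distSig xs x) ((distSig xs x) ^ 2 / δ) ≤
        ⟪∇ (smoothedObj K δ a b) x, x + xs⟫) ∧
    (∀ x : EuclideanSpace ℝ (Fin p), 0 < distSig xs x → distSig xs x ≤ lams / ρ →
      ∇ (smoothedObj K δ a b) x ≠ 0) := by
  unfold distSig
  have hf := smoothedObj_even K δ a b
  replace hsharp : GeneralizedSharp lams δ (smoothedObj K δ a b) xs := hsharp
  have hρδ : ρ * δ ≤ lams := (le_div_iff₀' hρ).mp hδle
  have near_pos := fun x ↦ hsharp.le_inner_gradient_sub hweak hf hδ hρ hlams hρδ (x := x)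
  have near_neg : ∀ x : EuclideanSpace ℝ (Fin p), ‖x + xs‖ ≤ lams / ρ →
      lams / 2 * min (min ‖x - xs‖ ‖x + xs‖) (min ‖x - xs‖ ‖x + xs‖ ^ 2 / δ) ≤
        ⟪∇ (smoothedObj K δ a b) x, x + xs⟫ := by
    intro x hx
    have := (hsharp.neg hf).le_inner_gradient_sub hweak hf hδ hρ hlams hρδ
      (by rwa [sub_neg_eq_add])
    rwa [sub_neg_eq_add, ← sub_eq_add_neg, min_comm ‖x + xs‖] at this
  refine ⟨near_pos, near_neg, fun x hpos hle hzero ↦ ?_⟩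
  have hgain : 0 < lams / 2 * min (min ‖x - xs‖ ‖x + xs‖) (min ‖x - xs‖ ‖x + xs‖ ^ 2 / δ) :=
    mul_pos (half_pos hlams) (lt_min hpos (by positivity))
  rcases min_choice ‖x - xs‖ ‖x + xs‖ with hΔ | hΔ
  · have := near_pos x (hΔ ▸ hle)
    rw [hzero, inner_zero_left] at this
    linarith
  · have := near_neg x (hΔ ▸ hle)
    rw [hzero, inner_zero_left] at this
    linarith

/-- Local gradient lower bound, noiseless case. If `F_δ` is `ρ`-weakly
convex and `λ_s`-generalized-sharp, then for `δ ≤ λ_s/ρ` the gradient inner products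
with `x ∓ x⋆` are bounded below near `±x⋆`, and there is no stationary point with
`0 < Δ(x) ≤ λ_s/ρ`. -/
theorem local_gradient_lower_bound_noiseless
    {p n : ℕ} (xs : EuclideanSpace ℝ (Fin p))
    (K : ℝ → ℝ) (hK : IsGoodKernel K) (δ : ℝ) (hδ : 0 < δ)
    (a : Fin n → EuclideanSpace ℝ (Fin p)) (b : Fin n → ℝ)
    (hb : ∀ i, b i = (⟪a i, xs⟫) ^ 2)
    (ρ lams : ℝ) (hρ : 0 < ρ) (hlams : 0 < lams)
    (hweak : ∀ x y : EuclideanSpace ℝ (Fin p),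
      ⟪∇ (smoothedObj K δ a b) x, y - x⟫ - ρ / 2 * ‖y - x‖ ^ 2 ≤
        smoothedObj K δ a b y - smoothedObj K δ a b x)
    (hsharp : ∀ x : EuclideanSpace ℝ (Fin p),
      lams * min (distSig xs x) ((distSig xs x) ^ 2 / δ) ≤
        smoothedObj K δ a b x - smoothedObj K δ a b xs)
    (hδle : δ ≤ lams / ρ) :
    (∀ x : EuclideanSpace ℝ (Fin p), ‖x - xs‖ ≤ lams / ρ →
      lams / 2 * min (distSig xs x) ((distSig xs x) ^ 2 / δ) ≤
        ⟪∇ (smoothedObj K δ a b) x, x - xs⟫) ∧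
    (∀ x : EuclideanSpace ℝ (Fin p), ‖x + xs‖ ≤ lams / ρ →
      lams / 2 * min (distSig xs x) ((distSig xs x) ^ 2 / δ) ≤
        ⟪∇ (smoothedObj K δ a b) x, x + xs⟫) ∧
    (∀ x : EuclideanSpace ℝ (Fin p), 0 < distSig xs x → distSig xs x ≤ lams / ρ →
      ∇ (smoothedObj K δ a b) x ≠ 0) :=
  local_gradient_lower_bound_noiseless_general xs K δ hδ a b ρ lams hρ hlams hweak hsharp hδle
end
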